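/- Let P and Q be finite Boolean sums of stack-depth at most 1, and let (P,x) and (Q,y) be n-generated models over the same n variables based on P and Q respectively. If (P,x) and (Q,y) are 2-bisimilar, then they are isomorphic (as models, via a root-preserving, color-preserving order isomorphism). -/

import Mathlib

/-! # Common framework: superintuitionistic logics, Kripke frames and models -/

/-! ## Intuitionistic propositional formulas -/

inductive Form : Type
  | var : ℕ → Form
  | bot : Form
  | top : Form
  | and : Form → Form → Form
  | or  : Form → Form → Form
  | imp : Form → Form → Form
deriving DecidableEq

namespace Form

/-- Implication depth of a formula. -/
def depth : Form → ℕ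
  | var _ => 0
  | bot => 0
  | top => 0
  | and φ ψ => max φ.depth ψ.depth
  | or φ ψ => max φ.depth ψ.depth
  | imp φ ψ => max φ.depth ψ.depth + 1

/-- All propositional variables of the formula are among `p_0, …, p_{m-1}`. -/
def varsLt (m : ℕ) : Form → Prop
  | var p => p < m
  | bot => True
  | top => True
  | and φ ψ => φ.varsLt m ∧ ψ.varsLt m
  | or φ ψ => φ.varsLt m ∧ ψ.varsLt m
  | imp φ ψ => φ.varsLt m ∧ ψ.varsLt m

/-- Uniform substitution. -/
def subst (σ : ℕ → Form) : Form → Form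
  | var p => σ p
  | bot => bot
  | top => top
  | and φ ψ => and (φ.subst σ) (ψ.subst σ)
  | or φ ψ => or (φ.subst σ) (ψ.subst σ)
  | imp φ ψ => imp (φ.subst σ) (ψ.subst σ)

/-- Biconditional. -/
def iff (φ ψ : Form) : Form := and (imp φ ψ) (imp ψ φ)

/-- Negation. -/
def neg (φ : Form) : Form := imp φ bot

end Form

/-! ## IPC and superintuitionistic logics -/

/-- A Hilbert-style axiomatization of intuitionistic propositional logic. -/
inductive IPC : Form → Prop
  | ax1 (φ ψ : Form) : IPC (.imp φ (.imp ψ φ))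
  | ax2 (φ ψ χ : Form) :
      IPC (.imp (.imp φ (.imp ψ χ)) (.imp (.imp φ ψ) (.imp φ χ)))
  | andE1 (φ ψ : Form) : IPC (.imp (.and φ ψ) φ)
  | andE2 (φ ψ : Form) : IPC (.imp (.and φ ψ) ψ)
  | andI (φ ψ : Form) : IPC (.imp φ (.imp ψ (.and φ ψ)))
  | orI1 (φ ψ : Form) : IPC (.imp φ (.or φ ψ))
  | orI2 (φ ψ : Form) : IPC (.imp ψ (.or φ ψ))
  | orE (φ ψ χ : Form) :
      IPC (.imp (.imp φ χ) (.imp (.imp ψ χ) (.imp (.or φ ψ) χ)))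
  | botE (φ : Form) : IPC (.imp .bot φ)
  | topI : IPC .top
  | mp (φ ψ : Form) : IPC (.imp φ ψ) → IPC φ → IPC ψ

/-- The set of theorems of IPC. -/
def IPCSet : Set Form := {φ | IPC φ}

/-- A superintuitionistic logic: a set of formulas containing all theorems of
IPC, closed under modus ponens and uniform substitution. -/
def IsSILogic (L : Set Form) : Prop :=
  IPCSet ⊆ L ∧
  (∀ φ ψ : Form, Form.imp φ ψ ∈ L → φ ∈ L → ψ ∈ L) ∧
  (∀ (φ : Form) (σ : ℕ → Form), φ ∈ L → φ.subst σ ∈ L)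

/-- `oplus L Γ` is the least superintuitionistic logic containing `L` and `Γ`
(written `L ⊕ Γ`). -/
def oplus (L Γ : Set Form) : Set Form :=
  ⋂₀ {M : Set Form | IsSILogic M ∧ L ⊆ M ∧ Γ ⊆ M}

/-- A logic is `n`-uniform if every formula is provably equivalent in it to a
formula of implication depth at most `n`. -/
def Uniform (L : Set Form) (n : ℕ) : Prop :=
  ∀ φ : Form, ∃ ψ : Form, ψ.depth ≤ n ∧ Form.iff φ ψ ∈ L

/-- A logic is locally tabular if over each finite tuple of variables there are
only finitely many formulas up to provable equivalence. -/
def LocallyTabular (L : Set Form) : Prop :=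
  ∀ m : ℕ, ∃ Φ : Finset Form, ∀ φ : Form, φ.varsLt m → ∃ ψ ∈ Φ, Form.iff φ ψ ∈ L

/-! ## Kripke frames (posets) -/

structure Frame : Type 1 where
  W : Type
  le : W → W → Prop
  refl : ∀ x, le x x
  trans : ∀ x y z, le x y → le y z → le x z
  antisymm : ∀ x y, le x y → le y x → x = y

namespace Frame

def lt (F : Frame) (a b : F.W) : Prop := F.le a b ∧ a ≠ b

/-- A valuation is persistent if it is preserved upwards. -/
def Persistent (F : Frame) (V : ℕ → F.W → Prop) : Prop :=
  ∀ p a b, F.le a b → V p a → V p b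

/-- Kripke forcing. -/
def force (F : Frame) (V : ℕ → F.W → Prop) : Form → F.W → Prop
  | .var p, w => V p w
  | .bot, _ => False
  | .top, _ => True
  | .and φ ψ, w => F.force V φ w ∧ F.force V ψ w
  | .or φ ψ, w => F.force V φ w ∨ F.force V ψ w
  | .imp φ ψ, w => ∀ v, F.le w v → F.force V φ v → F.force V ψ v

/-- `F ⊩ φ`. -/
def Valid (F : Frame) (φ : Form) : Prop :=
  ∀ V : ℕ → F.W → Prop, F.Persistent V → ∀ w : F.W, F.force V φ w

def Rooted (F : Frame) : Prop := ∃ r, ∀ w, F.le r w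

/-- The subposet on a subset of the carrier. -/
def restrict (F : Frame) (s : Set F.W) : Frame where
  W := s
  le a b := F.le a.1 b.1
  refl a := F.refl a.1
  trans a b c h1 h2 := F.trans a.1 b.1 c.1 h1 h2
  antisymm a b h1 h2 := Subtype.ext (F.antisymm a.1 b.1 h1 h2)

/-- The rooted upset `↑z`. -/
def up (F : Frame) (z : F.W) : Frame := F.restrict {w | F.le z w}

/-- There is a chain of `d` elements in `↑w` starting at `w`. -/
def hasChainUp (F : Frame) (w : F.W) (d : ℕ) : Prop :=
  ∃ f : Fin d → F.W, (∀ i : Fin d, (i : ℕ) = 0 → f i = w) ∧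
    (∀ i j : Fin d, (i : ℕ) < (j : ℕ) → F.lt (f i) (f j))

/-- The depth of `w` is `d`: the longest chain in `↑w` has exactly `d` elements. -/
def depthEq (F : Frame) (w : F.W) (d : ℕ) : Prop :=
  F.hasChainUp w d ∧ ¬ F.hasChainUp w (d + 1)

/-- The covering relation of the poset. -/
def covBy (F : Frame) (a b : F.W) : Prop :=
  F.lt a b ∧ ∀ c, F.lt a c → F.lt c b → False

end Frame

/-- A p-morphism of posets. -/
def IsPMorphism (P Q : Frame) (f : P.W → Q.W) : Prop :=
  (∀ a b, P.le a b → Q.le (f a) (f b)) ∧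
  (∀ a b, Q.le (f a) b → ∃ a', P.le a a' ∧ f a' = b)

/-- `Q` is a p-morphic image of `P`. -/
def PMorphicImage (P Q : Frame) : Prop :=
  ∃ f : P.W → Q.W, IsPMorphism P Q f ∧ Function.Surjective f

/-- Order isomorphism of posets. -/
def FrameIso (P Q : Frame) : Prop :=
  ∃ f : P.W → Q.W, Function.Bijective f ∧ ∀ a b, P.le a b ↔ Q.le (f a) (f b)

/-- The logic of a class of posets. -/
def LogK (K : Set Frame) : Set Form := {φ | ∀ F ∈ K, F.Valid φ}

/-- The logic of a single poset. -/
def FrameLog (F : Frame) : Set Form := {φ | F.Valid φ}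

/-- `J` is a Yankov formula for the finite rooted poset `Q`: a finite poset
refutes `J` exactly when `Q` is isomorphic to a rooted upset of one of its
p-morphic images. -/
def IsYankov (J : Form) (Q : Frame) : Prop :=
  ∀ P : Frame, Finite P.W →
    (¬ P.Valid J ↔ ∃ G : Frame, PMorphicImage P G ∧ ∃ z : G.W, FrameIso (G.up z) Q)

/-! ## Rooted Kripke models over `n` propositional variables -/

structure Model (n : ℕ) : Type 1 where
  W : Type
  le : W → W → Prop
  refl : ∀ x, le x x
  trans : ∀ x y z, le x y → le y z → le x z
  antisymm : ∀ x y, le x y → le y x → x = y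
  root : W
  rooted : ∀ w, le root w
  col : W → Set (Fin n)
  mono : ∀ a b, le a b → col a ⊆ col b

namespace Model

/-- The underlying poset of a model. -/
def frame {n : ℕ} (M : Model n) : Frame :=
  ⟨M.W, M.le, M.refl, M.trans, M.antisymm⟩

def force {n : ℕ} (M : Model n) : Form → M.W → Prop
  | .var p, w => ∃ h : p < n, (⟨p, h⟩ : Fin n) ∈ M.col w
  | .bot, _ => False
  | .top, _ => True
  | .and φ ψ, w => M.force φ w ∧ M.force ψ w
  | .or φ ψ, w => M.force φ w ∨ M.force ψ w
  | .imp φ ψ, w => ∀ v, M.le w v → M.force φ v → M.force ψ v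

/-- Satisfaction at the root of the model. -/
def Sat {n : ℕ} (M : Model n) (φ : Form) : Prop := M.force φ M.root

/-- (Full) bisimilarity of two rooted models. -/
def Bisim {n : ℕ} (M N : Model n) : Prop :=
  ∃ S : M.W → N.W → Prop,
    S M.root N.root ∧
    (∀ a b, S a b → M.col a = N.col b) ∧
    (∀ a b a', S a b → M.le a a' → ∃ b', N.le b b' ∧ S a' b') ∧
    (∀ a b b', S a b → N.le b b' → ∃ a', M.le a a' ∧ S a' b')

/-- `k`-bisimilarity of the points `x, y`, via a decreasing chain
`S k ⊆ ⋯ ⊆ S 0` of relations. -/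
def NBisimAt {n : ℕ} (M N : Model n) (k : ℕ) (x : M.W) (y : N.W) : Prop :=
  ∃ S : ℕ → M.W → N.W → Prop,
    (∀ j a b, S (j + 1) a b → S j a b) ∧
    S k x y ∧
    (∀ a b, S 0 a b → M.col a = N.col b) ∧
    (∀ j a b a', j < k → S (j + 1) a b → M.le a a' →
        ∃ b', N.le b b' ∧ S j a' b') ∧
    (∀ j a b b', j < k → S (j + 1) a b → N.le b b' →
        ∃ a', M.le a a' ∧ S j a' b')

/-- `k`-bisimilarity of two rooted models. -/
def NBisim {n : ℕ} (M N : Model n) (k : ℕ) : Prop :=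
  NBisimAt M N k M.root N.root

/-- The submodel on the rooted upset `↑z`. -/
def up {n : ℕ} (M : Model n) (z : M.W) : Model n where
  W := {w : M.W // M.le z w}
  le a b := M.le a.1 b.1
  refl a := M.refl a.1
  trans a b c h1 h2 := M.trans a.1 b.1 c.1 h1 h2
  antisymm a b h1 h2 := Subtype.ext (M.antisymm a.1 b.1 h1 h2)
  root := ⟨z, M.refl z⟩
  rooted w := w.2
  col a := M.col a.1
  mono a b h := M.mono a.1 b.1 h

/-- `(M, x) ≤ₖ (N, y)`: there is `z ≥ x` such that `(↑z, z)` is `k`-bisimilar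
with `(N, y)`. -/
def LeBisim {n : ℕ} (M N : Model n) (k : ℕ) : Prop :=
  ∃ z : M.W, M.le M.root z ∧ NBisim (M.up z) N k

/-- Two points of a model are bisimilar. -/
def PointsBisim {n : ℕ} (M : Model n) (a b : M.W) : Prop :=
  ∃ S : M.W → M.W → Prop,
    S a b ∧
    (∀ x y, S x y → M.col x = M.col y) ∧
    (∀ x y x', S x y → M.le x x' → ∃ y', M.le y y' ∧ S x' y') ∧
    (∀ x y y', S x y → M.le y y' → ∃ x', M.le x x' ∧ S x' y')

/-- A model over `n` variables is (`n`-)generated if it contains no two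
distinct bisimilar points. -/
def Generated {n : ℕ} (M : Model n) : Prop :=
  ∀ a b : M.W, M.PointsBisim a b → a = b

/-- Isomorphism of models: a root-preserving, color-preserving order
isomorphism. -/
def Iso {n : ℕ} (M N : Model n) : Prop :=
  ∃ f : M.W → N.W, Function.Bijective f ∧ f M.root = N.root ∧
    (∀ a b, M.le a b ↔ N.le (f a) (f b)) ∧ (∀ a, N.col (f a) = M.col a)

/-- `M` is a model over the class of posets `K`: its underlying poset is a
p-morphic image of a rooted upset of a member of `K`. -/
def InClass {n : ℕ} (K : Set Frame) (M : Model n) : Prop :=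
  ∃ F ∈ K, ∃ z : F.W, PMorphicImage (F.up z) M.frame

/-- The model on the rooted upset `↑z` of a frame `F`, with coloring `c`. -/
def ofFrame (F : Frame) (z : F.W) (n : ℕ) (c : (F.up z).W → Set (Fin n))
    (hc : ∀ a b : (F.up z).W, (F.up z).le a b → c a ⊆ c b) : Model n where
  W := (F.up z).W
  le := (F.up z).le
  refl := (F.up z).refl
  trans := (F.up z).trans
  antisymm := (F.up z).antisymm
  root := ⟨z, F.refl z⟩
  rooted w := w.2
  col := c
  mono := hc

end Model

/-! ## Boolean sums and stacks -/

/-- A (finite rooted) poset is a Boolean sum: it is rooted, covers decrease the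
depth by exactly one, and every point of depth `k+1` lies below every point of
depth `k`. -/
def IsBooleanSum (F : Frame) : Prop :=
  F.Rooted ∧
  (∀ a b da db, F.covBy a b → F.depthEq a da → F.depthEq b db → da = db + 1) ∧
  (∀ a b k, F.depthEq a (k + 1) → F.depthEq b k → F.le a b)

/-- `F` contains a `k`-stack: `k` consecutive layers (sets of points of equal
depth) each containing at least two points. -/
def HasStack (F : Frame) (k : ℕ) : Prop :=
  ∃ j : ℕ, ∀ i : ℕ, j ≤ i → i < j + k →
    ∃ a b : F.W, a ≠ b ∧ F.depthEq a i ∧ F.depthEq b i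

/-! ## The posets Q₁, …, Q₈ -/

def q1le : Fin 4 → Fin 4 → Bool := fun a b =>
  a = b || a = 0 || (a = 1 && b = 3)
def q2le : Fin 5 → Fin 5 → Bool := fun a b =>
  a = b || a = 0 || (a = 1 && (b = 3 || b = 4)) || (a = 2 && b = 4)
def q3le : Fin 5 → Fin 5 → Bool := fun a b =>
  a = b || a = 0 || (a = 1 && b = 4) || (a = 2 && (b = 3 || b = 4)) ||
    (a = 3 && b = 4)
def q4le : Fin 5 → Fin 5 → Bool := fun a b =>
  a = b || a = 0 || ((a = 1 || a = 2) && (b = 3 || b = 4))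
def q5le : Fin 6 → Fin 6 → Bool := fun a b =>
  a = b || a = 0 || b = 5 || ((a = 1 || a = 2) && (b = 3 || b = 4))
def q6le : Fin 4 → Fin 4 → Bool := fun a b =>
  a = b || a = 0 || b = 3
def q7le : Fin 5 → Fin 5 → Bool := fun a b =>
  a = b || a = 0 || (a = 1 && b = 3) || (a = 2 && b = 4)
def q8le : Fin 4 → Fin 4 → Bool := fun a b =>
  a = b || a = 0

/-- `Q₁`: root `0`; immediate successors `1`, `2`; `2` maximal; `3` the unique
(maximal) immediate successor of `1`. -/
def Q1f : Frame :=
  ⟨Fin 4, fun a b => q1le a b = true, by decide, by decide, by decide⟩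
/-- `Q₂`: root `0`; immediate successors `1`, `2`; maximal points `3`, `4`;
`1 < 3`, `1 < 4`, `2 < 4`, `2 ≮ 3`. -/
def Q2f : Frame :=
  ⟨Fin 5, fun a b => q2le a b = true, by decide, by decide, by decide⟩
/-- `Q₃`: root `0`; immediate successors `1`, `2`; `3` covers `2`; top `4`
with `1 < 4` and `3 < 4`. -/
def Q3f : Frame :=
  ⟨Fin 5, fun a b => q3le a b = true, by decide, by decide, by decide⟩
/-- `Q₄`: root `0`; `1`, `2` cover the root; maximal `3`, `4` above both `1`
and `2`. -/
def Q4f : Frame :=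
  ⟨Fin 5, fun a b => q4le a b = true, by decide, by decide, by decide⟩
/-- `Q₅`: `Q₄` with a greatest element `5` added on top. -/
def Q5f : Frame :=
  ⟨Fin 6, fun a b => q5le a b = true, by decide, by decide, by decide⟩
/-- `Q₆`: the diamond. -/
def Q6f : Frame :=
  ⟨Fin 4, fun a b => q6le a b = true, by decide, by decide, by decide⟩
/-- `Q₇`: root `0`; `1 < 3`, `2 < 4`, and no other strict relations above the
root. -/
def Q7f : Frame :=
  ⟨Fin 5, fun a b => q7le a b = true, by decide, by decide, by decide⟩
/-- `Q₈`: a root with three pairwise incomparable maximal points. -/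
def Q8f : Frame :=
  ⟨Fin 4, fun a b => q8le a b = true, by decide, by decide, by decide⟩

/-! ## Particular logics -/

/-- The one-element poset. -/
def unitFrame : Frame :=
  ⟨PUnit, fun _ _ => True, fun _ => trivial, fun _ _ _ _ _ => trivial,
    fun a b _ _ => Subsingleton.elim a b⟩

/-- The two-element chain. -/
def chain2 : Frame :=
  ⟨Bool, fun a b => a ≤ b, le_refl, fun _ _ _ => le_trans,
    fun _ _ => le_antisymm⟩

/-- Classical propositional logic: the logic of the one-element poset. -/
def CPC : Set Form := FrameLog unitFrame

/-- The logic of the two-element chain. -/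
def Sme : Set Form := FrameLog chain2

/-- The weak Peirce law `(q → p) ∨ (((p → q) → p) → p)`. -/
def wPLax : Form :=
  .or (.imp (.var 1) (.var 0))
    (.imp (.imp (.imp (.var 0) (.var 1)) (.var 0)) (.var 0))

/-- The logic `wPL = IPC ⊕ (q → p) ∨ (((p → q) → p) → p)`. -/
def wPL : Set Form := oplus IPCSet {wPLax}

/-- The bounded-width-2 axiom `⋁_{i≤2} (pᵢ → ⋁_{j≠i} pⱼ)`. -/
def bw2ax : Form :=
  .or (.imp (.var 0) (.or (.var 1) (.var 2)))
    (.or (.imp (.var 1) (.or (.var 0) (.var 2)))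
      (.imp (.var 2) (.or (.var 0) (.var 1))))

/-- The axiom `¬p ∨ ¬¬p`. -/
def kcax : Form := .or (Form.neg (.var 0)) (Form.neg (Form.neg (.var 0)))

/-- The logic `Box = wPL ⊕ bw₂ ⊕ (¬p ∨ ¬¬p)`. -/
def BoxLogic : Set Form := oplus wPL {bw2ax, kcax}

/-- The bounded-depth formulas. -/
def bd : ℕ → Form
  | 0 => .var 0
  | n + 1 => .or (.var (n + 1)) (.imp (.var (n + 1)) (bd n))

/-- The logic `BD_n = IPC ⊕ bd_n`. -/
def BD (n : ℕ) : Set Form := oplus IPCSet {bd n}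

/-- A logic is of finite depth if it contains some `BD_n`. -/
def FiniteDepth (L : Set Form) : Prop := ∃ n, BD n ⊆ L

/-! ## The Rieger–Nishimura ladder -/

/-- Points of the Rieger–Nishimura ladder: `inl k = L_k`, `inr k = R_k`. -/
abbrev RNpt : Type := ℕ ⊕ ℕ

/-- The covering relation of the Rieger–Nishimura ladder (`rnCov a b` means
`a ⋖ b`, i.e. `b` is an immediate successor of `a`). -/
inductive rnCov : RNpt → RNpt → Prop
  | ll (k : ℕ) : rnCov (.inl (k + 1)) (.inl k)
  | rr (k : ℕ) : rnCov (.inr (k + 1)) (.inr k)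
  | rl (k : ℕ) : rnCov (.inr (k + 1)) (.inl k)
  | lr (k : ℕ) : rnCov (.inl (k + 2)) (.inr k)

private def rnIdx : RNpt → ℕ
  | .inl k => 2 * k
  | .inr k => 2 * k + 1

private theorem rnCov_idx {a b : RNpt} (h : rnCov a b) : rnIdx b < rnIdx a := by
  cases h <;> simp [rnIdx] <;> omega

private theorem rnLe_idx {a b : RNpt} (h : Relation.ReflTransGen rnCov a b) :
    rnIdx b ≤ rnIdx a := by
  induction h with
  | refl => exact le_rfl
  | tail _ h₂ ih => exact le_trans (le_of_lt (rnCov_idx h₂)) ih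

private theorem rnIdx_inj {a b : RNpt} (h : rnIdx a = rnIdx b) : a = b := by
  rcases a with a | a <;> rcases b with b | b <;> simp [rnIdx] at h ⊢ <;> omega

/-- The Rieger–Nishimura ladder as a poset: the order is the reflexive
transitive closure of the covering relation. -/
def RN : Frame where
  W := RNpt
  le a b := Relation.ReflTransGen rnCov a b
  refl _ := Relation.ReflTransGen.refl
  trans _ _ _ h1 h2 := h1.trans h2
  antisymm _ _ h1 h2 := rnIdx_inj (le_antisymm (rnLe_idx h2) (rnLe_idx h1))

/-! ## Combs -/

def combLe (n : ℕ) : (Fin n ⊕ Fin n) → (Fin n ⊕ Fin n) → Prop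
  | .inl i, .inl j => i ≤ j
  | .inl i, .inr j => i ≤ j
  | .inr i, .inr j => i = j
  | .inr _, .inl _ => False

/-- The `n`-comb: base points `x_1 ≤ … ≤ x_n` (encoded `inl 0, …, inl (n-1)`)
and maximal teeth `y_1, …, y_n` (encoded `inr 0, …, inr (n-1)`), with
`x_i ≤ y_j ↔ i ≤ j` and the teeth pairwise incomparable. -/
def Comb (n : ℕ) : Frame where
  W := Fin n ⊕ Fin n
  le := combLe n
  refl := by rintro (i | i) <;> simp [combLe]
  trans := by
    rintro (i | i) (j | j) (k | k) h1 h2 <;> simp only [combLe] at * <;>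
      first
        | exact le_trans h1 h2
        | exact h2 ▸ h1
  antisymm := by
    rintro (i | i) (j | j) h1 h2 <;> simp only [combLe] at * <;>
      first
        | exact congrArg Sum.inl (le_antisymm h1 h2)
        | exact congrArg Sum.inr h1

/-- A broken `m`-comb: (isomorphic to) a subposet of the `m`-comb containing
all of the base points `x_1, …, x_m`. -/
def IsBrokenComb (F : Frame) (m : ℕ) : Prop :=
  ∃ s : Set (Comb m).W, (∀ i : Fin m, Sum.inl i ∈ s) ∧
    FrameIso F ((Comb m).restrict s)

/-- The logic of the class of all combs. -/
def LFC : Set Form := LogK {F | ∃ n, F = Comb n}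

/-! ## The stacked models `M_n^k` and `N_n^k` -/

/-- Height index of a point: layer `j` (from the top) has index `j`, the root
(`none`) has index `k+1`. -/
def stackIdx (k : ℕ) : Option (Fin (k + 1) × Bool) → ℕ
  | none => k + 1
  | some (j, _) => j

/-- Size of the color (an initial segment of the variables): the left point
(`false`) of layer `j` gets `1^{n-j}0^j`, the right point (`true`) gets
`1^{n-j-1}0^{j+1}`, and the root gets `1^r0^{n-r}`. -/
def stackColSize (n k r : ℕ) : Option (Fin (k + 1) × Bool) → ℕ
  | none => r
  | some (j, false) => n - j
  | some (j, true) => n - ((j : ℕ) + 1)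

private theorem stackColSize_le (n k r : ℕ) (hr : r ≤ n - (k + 1))
    {a b : Option (Fin (k + 1) × Bool)} (h : stackIdx k b < stackIdx k a) :
    stackColSize n k r a ≤ stackColSize n k r b := by
  rcases a with _ | ⟨j, _ | _⟩ <;> rcases b with _ | ⟨j', _ | _⟩ <;>
    simp only [stackIdx, stackColSize] at * <;> omega

/-- The common shape of `M_n^k` and `N_n^k`, with root color `1^r0^{n-r}`:
`k+1` layers of two points stacked on top of a root. -/
def stackModel (n k r : ℕ) (hr : r ≤ n - (k + 1)) : Model n where
  W := Option (Fin (k + 1) × Bool)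
  le a b := a = b ∨ stackIdx k b < stackIdx k a
  refl _ := Or.inl rfl
  trans := by
    rintro a b c (rfl | h1) h2
    · exact h2
    · rcases h2 with rfl | h2
      · exact Or.inr h1
      · exact Or.inr (h2.trans h1)
  antisymm := by
    rintro a b (rfl | h1) h2
    · rfl
    · rcases h2 with rfl | h2
      · rfl
      · omega
  root := none
  rooted := by
    rintro (_ | ⟨j, s⟩)
    · exact Or.inl rfl
    · exact Or.inr j.isLt
  col a := {i : Fin n | (i : ℕ) < stackColSize n k r a}
  mono := by
    rintro a b (rfl | h) i hi
    · exact hi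
    · exact lt_of_lt_of_le hi (stackColSize_le n k r hr h)

/-- The model `M_n^k` (root color `1^{n-k-1}0^{k+1}`). -/
def Mmodel (n k : ℕ) : Model n := stackModel n k (n - (k + 1)) le_rfl

/-- The model `N_n^k` (root color `1^{n-k-2}0^{k+2}`). -/
def Nmodel (n k : ℕ) : Model n := stackModel n k (n - (k + 2)) (by omega)

/-! ## The frames `S_n` -/

/-- Height index in `S_n`: the top point (`some none`) has index `0`, the two
points of the `j`-th middle layer have index `j+1`, and the root (`none`) has
index `n`. -/
def sIdx (n : ℕ) : Option (Option (Fin (n - 1) × Bool)) → ℕ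
  | none => n
  | some none => 0
  | some (some (j, _)) => (j : ℕ) + 1

/-- The frame `S_n` (for `n ≥ 2`): the Boolean sum whose layers from top to
bottom have sizes `1, 2, …, 2, 1` (with `n - 1` layers of size `2`). -/
def SFrame (n : ℕ) : Frame where
  W := Option (Option (Fin (n - 1) × Bool))
  le a b := a = b ∨ sIdx n b < sIdx n a
  refl _ := Or.inl rfl
  trans := by
    rintro a b c (rfl | h1) h2
    · exact h2
    · rcases h2 with rfl | h2
      · exact Or.inr h1
      · exact Or.inr (h2.trans h1)
  antisymm := by
    rintro a b (rfl | h1) h2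
    · rfl
    · rcases h2 with rfl | h2
      · rfl
      · omega

/-!
In a finite Boolean sum `a ≤ b` holds iff `a = b` or `b` lies in a shallower layer, and two
points of one layer with the same colour are bisimilar. Hence in a generated Boolean sum a
colour can only repeat from a layer with two colours to the layer directly below it; with no
two consecutive wide layers this forces `a ≤ b` as soon as every colour visible from `b` is
visible from `a`. So a point, and its place in the order, is determined by its colour and the
set of colours it sees. A `2`-bisimulation matches every point of either model with a point
of the other with the same colour seeing the same colours, and the matching is the
isomorphism.
-/

namespace Frame

variable {F : Frame}

theorem hasChainUp.le_card [Finite F.W] {w : F.W} {d : ℕ} (hc : F.hasChainUp w d) :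
    d ≤ Nat.card F.W := by
  obtain ⟨f, -, hf⟩ := hc
  have hinj : Function.Injective f := by
    intro i j hij
    rcases lt_trichotomy (i : ℕ) j with h | h | h
    · exact absurd hij (hf i j h).2
    · exact Fin.ext h
    · exact absurd hij.symm (hf j i h).2
  simpa using Nat.card_le_card_of_injective f hinj

theorem hasChainUp.cons {a w : F.W} {d : ℕ} (hlt : F.lt a w) (hc : F.hasChainUp w d) :
    F.hasChainUp a (d + 1) := by
  obtain ⟨f, hf₀, hf⟩ := hc
  have hwf : ∀ i, F.le w (f i) := by
    intro i
    by_cases hi : (i : ℕ) = 0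
    · exact hf₀ i hi ▸ F.refl w
    · exact hf₀ ⟨0, by omega⟩ rfl ▸ (hf ⟨0, by omega⟩ i (Nat.pos_of_ne_zero hi)).1
  refine ⟨Fin.cons a f, fun i hi => by rw [show i = 0 from Fin.ext hi]; rfl, fun i j hij => ?_⟩
  cases i using Fin.cases with
  | zero =>
    cases j using Fin.cases with
    | zero => exact absurd hij (lt_irrefl _)
    | succ j =>
      show F.lt a (f j)
      exact ⟨F.trans _ _ _ hlt.1 (hwf j), fun h => hlt.2 (F.antisymm _ _ hlt.1 (h ▸ hwf j))⟩
  | succ i =>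
    cases j using Fin.cases with
    | zero => exact absurd hij (Nat.not_lt_zero _)
    | succ j => simpa using hf i j (by simpa using hij)

variable (F)

open Classical in
noncomputable def dep [Finite F.W] (w : F.W) : ℕ :=
  Nat.findGreatest (F.hasChainUp w) (Nat.card F.W)

variable [Finite F.W]

theorem hasChainUp_dep (w : F.W) : F.hasChainUp w (F.dep w) := by
  classical
  exact Nat.findGreatest_spec (Nat.zero_le _) ⟨Fin.elim0, fun i => i.elim0, fun i => i.elim0⟩

theorem le_dep_of_hasChainUp {w : F.W} {d : ℕ} (hc : F.hasChainUp w d) : d ≤ F.dep w := by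
  classical
  exact Nat.le_findGreatest hc.le_card hc

theorem depthEq_dep (w : F.W) : F.depthEq w (F.dep w) :=
  ⟨F.hasChainUp_dep w, fun hc => by have := F.le_dep_of_hasChainUp hc; omega⟩

theorem dep_lt_of_lt {a b : F.W} (h : F.lt a b) : F.dep b < F.dep a :=
  F.le_dep_of_hasChainUp ((F.hasChainUp_dep b).cons h)

theorem dep_le_of_le {a b : F.W} (h : F.le a b) : F.dep b ≤ F.dep a := by
  by_cases hab : a = b
  · rw [hab]
  · exact (F.dep_lt_of_lt ⟨h, hab⟩).le

theorem eq_of_le_of_dep_eq {a b : F.W} (h : F.le a b) (hd : F.dep a = F.dep b) : a = b := by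
  by_contra hab
  have := F.dep_lt_of_lt ⟨h, hab⟩
  omega

theorem exists_lt_dep_eq {w : F.W} {m : ℕ} (h : F.dep w = m + 1) (hm : 0 < m) :
    ∃ v, F.lt w v ∧ F.dep v = m := by
  obtain ⟨f, hf₀, hf⟩ := h ▸ F.hasChainUp_dep w
  have hwv : F.lt w (f ⟨1, by omega⟩) := hf₀ ⟨0, by omega⟩ rfl ▸ hf _ _ Nat.zero_lt_one
  have htail : F.hasChainUp (f ⟨1, by omega⟩) m :=
    ⟨fun i => f i.succ, fun i hi => congrArg f (Fin.ext (by simp [hi])),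
      fun i j hij => hf _ _ (by simpa using hij)⟩
  have := F.le_dep_of_hasChainUp htail
  have := F.dep_lt_of_lt hwv
  exact ⟨_, hwv, by omega⟩

variable {F}

theorem hasStack_two_of_ne {i : ℕ} {a₁ a₂ b₁ b₂ : F.W} (ha : a₁ ≠ a₂) (ha₁ : F.dep a₁ = i)
    (ha₂ : F.dep a₂ = i) (hb : b₁ ≠ b₂) (hb₁ : F.dep b₁ = i + 1) (hb₂ : F.dep b₂ = i + 1) :
    HasStack F 2 := by
  refine ⟨i, fun i' h₁ h₂ => ?_⟩
  obtain rfl | rfl : i' = i ∨ i' = i + 1 := by omega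
  · exact ⟨a₁, a₂, ha, ha₁ ▸ F.depthEq_dep a₁, ha₂ ▸ F.depthEq_dep a₂⟩
  · exact ⟨b₁, b₂, hb, hb₁ ▸ F.depthEq_dep b₁, hb₂ ▸ F.depthEq_dep b₂⟩

end Frame

theorem IsBooleanSum.le_of_dep_lt {F : Frame} [Finite F.W] (hbs : IsBooleanSum F) {a b : F.W}
    (h : F.dep b < F.dep a) : F.le a b := by
  obtain ⟨k, hk⟩ : ∃ k, F.dep a = F.dep b + 1 + k := ⟨_, (Nat.add_sub_of_le h).symm⟩
  induction k generalizing a with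
  | zero => exact hbs.2.2 a b _ (hk ▸ F.depthEq_dep a) (F.depthEq_dep b)
  | succ k ih =>
    obtain ⟨v, hav, hv⟩ := F.exists_lt_dep_eq (m := F.dep b + 1 + k) (by omega) (by omega)
    exact F.trans _ _ _ hav.1 (ih (by omega) hv)

namespace Model

variable {n : ℕ}

instance (M : Model n) [h : Finite M.W] : Finite M.frame.W := h

section

variable (M : Model n)

def upColors (a : M.W) : Set (Set (Fin n)) := M.col '' {b | M.le a b}

variable {M}

theorem upColors_anti {a b : M.W} (h : M.le a b) : M.upColors b ⊆ M.upColors a :=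
  Set.image_mono fun _ hc => M.trans _ _ _ h hc

theorem pointsBisim_of_col_eq {a b : M.W} (hc : M.col a = M.col b)
    (ha : ∀ a', M.le a a' → a' ≠ a → M.le b a') (hb : ∀ b', M.le b b' → b' ≠ b → M.le a b') :
    M.PointsBisim a b := by
  refine ⟨fun x y => x = y ∨ (x = a ∧ y = b), Or.inr ⟨rfl, rfl⟩, ?_, ?_, ?_⟩
  · rintro x y (rfl | ⟨rfl, rfl⟩)
    · rfl
    · exact hc
  · rintro x y x' (rfl | ⟨rfl, rfl⟩) hx
    · exact ⟨x', hx, Or.inl rfl⟩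
    · by_cases h : x' = x
      · exact ⟨y, M.refl y, Or.inr ⟨h, rfl⟩⟩
      · exact ⟨x', ha x' hx h, Or.inl rfl⟩
  · rintro x y y' (rfl | ⟨rfl, rfl⟩) hy
    · exact ⟨y', hy, Or.inl rfl⟩
    · by_cases h : y' = y
      · exact ⟨x, M.refl x, Or.inr ⟨rfl, h⟩⟩
      · exact ⟨y', hb y' hy h, Or.inl rfl⟩

variable [Finite M.W] (hbs : IsBooleanSum M.frame)
include hbs

theorem col_eq_of_dep_lt_of_dep_lt {w v z : M.W} (h₁ : M.frame.dep w < M.frame.dep v)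
    (h₂ : M.frame.dep v < M.frame.dep z) (hc : M.col w = M.col z) : M.col v = M.col w :=
  (M.mono _ _ (hbs.le_of_dep_lt h₁)).antisymm (hc ▸ M.mono _ _ (hbs.le_of_dep_lt h₂))

variable (hg : M.Generated)
include hg

theorem eq_of_dep_eq_of_col_eq {a b : M.W} (hd : M.frame.dep a = M.frame.dep b)
    (hc : M.col a = M.col b) : a = b :=
  hg a b <| pointsBisim_of_col_eq hc
    (fun _ ha hne => hbs.le_of_dep_lt (hd ▸ M.frame.dep_lt_of_lt ⟨ha, hne.symm⟩))
    (fun _ hb hne => hbs.le_of_dep_lt (hd ▸ M.frame.dep_lt_of_lt ⟨hb, hne.symm⟩))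

theorem exists_col_ne_of_dep_eq_succ {z u : M.W} (hd : M.frame.dep z = M.frame.dep u + 1)
    (hc : M.col z = M.col u) : ∃ u', M.frame.dep u' = M.frame.dep u ∧ M.col u' ≠ M.col u := by
  -- Otherwise the layer of `u` is `{u}`, and then `z` is bisimilar to `u`.
  by_contra! hsame
  have hzu : z = u := hg z u <| pointsBisim_of_col_eq hc
    (fun z' hz hne => by
      have := M.frame.dep_lt_of_lt ⟨hz, hne.symm⟩
      rcases Nat.lt_or_ge (M.frame.dep z') (M.frame.dep u) with hlt | hge
      · exact hbs.le_of_dep_lt hlt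
      · rw [eq_of_dep_eq_of_col_eq hbs hg (by omega) (hsame z' (by omega))]
        exact M.refl u)
    (fun u' hu hne => hbs.le_of_dep_lt (by have := M.frame.dep_lt_of_lt ⟨hu, hne.symm⟩; omega))
  subst hzu
  omega

theorem dep_eq_succ_of_col_eq {w z : M.W} (hd : M.frame.dep w < M.frame.dep z)
    (hc : M.col w = M.col z) :
    M.frame.dep z = M.frame.dep w + 1 ∧
      ∃ w', M.frame.dep w' = M.frame.dep w ∧ M.col w' ≠ M.col w := by
  have hsucc : M.frame.dep z = M.frame.dep w + 1 := by
    -- Otherwise the layer just above `z` is squeezed to the colour of `z`.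
    by_contra hne
    obtain ⟨v, -, hv⟩ := M.frame.exists_lt_dep_eq (w := z) (m := M.frame.dep z - 1)
      (by omega) (by omega)
    have hvw := col_eq_of_dep_lt_of_dep_lt hbs (v := v) (by omega) (by omega) hc
    obtain ⟨v', hv', hne'⟩ := exists_col_ne_of_dep_eq_succ hbs hg (z := z) (u := v)
      (by omega) (hvw.trans hc).symm
    exact hne' ((col_eq_of_dep_lt_of_dep_lt hbs (v := v') (by omega) (by omega) hc).trans
      hvw.symm)
  exact ⟨hsucc, exists_col_ne_of_dep_eq_succ hbs hg hsucc hc.symm⟩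

theorem le_of_upColors_subset (hs : ¬ HasStack M.frame 2) {a b : M.W}
    (h : M.upColors b ⊆ M.upColors a) : M.le a b := by
  by_contra hab
  have hne : a ≠ b := fun h => hab (h ▸ M.refl a)
  have hdab : M.frame.dep a ≤ M.frame.dep b := not_lt.1 fun h => hab (hbs.le_of_dep_lt h)
  -- The colour of `b` is seen from `a` at some `v` outside the layer of `b`, so it repeats
  -- from the wide layer of `v` to the layer of `b` directly below it.
  obtain ⟨v, hav, hvb⟩ := h ⟨b, M.refl b, rfl⟩
  have hdva := M.frame.dep_le_of_le hav
  have hdvb : M.frame.dep v < M.frame.dep b := by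
    by_contra! hge
    obtain rfl : a = v := M.frame.eq_of_le_of_dep_eq hav (by omega)
    exact hne (eq_of_dep_eq_of_col_eq hbs hg (by omega) hvb)
  obtain ⟨hdb, w', hw', hcw'⟩ := dep_eq_succ_of_col_eq hbs hg hdvb hvb
  have hw'v : w' ≠ v := fun h => hcw' (congrArg M.col h)
  obtain ⟨u, hau, huw'⟩ := h ⟨w', hbs.le_of_dep_lt (by omega), rfl⟩
  rcases (by omega : M.frame.dep a = M.frame.dep b ∨ M.frame.dep a = M.frame.dep v)
    with hda | hda
  · exact hs (Frame.hasStack_two_of_ne hw'v hw' rfl hne (by omega) hdb)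
  · -- Now `a = v`, and the colour of `w'` is seen from `a` strictly above `a`: it repeats
    -- from a wide layer to the (wide) layer of `v` and `w'`.
    obtain rfl : a = v := M.frame.eq_of_le_of_dep_eq hav hda
    have hua : u ≠ a := fun h => hcw' (huw'.symm.trans (congrArg M.col h))
    have hdu := M.frame.dep_lt_of_lt ⟨hau, hua.symm⟩
    obtain ⟨hdw', u', hu', hcu'⟩ := dep_eq_succ_of_col_eq hbs hg (z := w') (by omega) huw'
    exact hs (Frame.hasStack_two_of_ne (fun h => hcu' (congrArg M.col h)) hu' rfl hw'v hdw'
      (by omega))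

end

namespace NBisimAt

variable {M N : Model n} {k : ℕ} {x : M.W} {y : N.W}

theorem symm (h : M.NBisimAt N k x y) : N.NBisimAt M k y x := by
  obtain ⟨S, hmono, hxy, hcol, hforth, hback⟩ := h
  exact ⟨fun j b a => S j a b, fun j b a => hmono j a b, hxy, fun b a h => (hcol a b h).symm,
    fun j b a b' hj h hb => hback j a b b' hj h hb, fun j b a a' hj h ha => hforth j a b a' hj h ha⟩

theorem forth (h : M.NBisimAt N (k + 1) x y) {x' : M.W} (hx : M.le x x') :
    ∃ y', N.le y y' ∧ M.NBisimAt N k x' y' := by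
  obtain ⟨S, hmono, hxy, hcol, hforth, hback⟩ := h
  obtain ⟨y', hy, hS⟩ := hforth k x y x' k.lt_succ_self hxy hx
  exact ⟨y', hy, S, hmono, hS, hcol, fun j a b a' hj => hforth j a b a' (by omega),
    fun j a b b' hj => hback j a b b' (by omega)⟩

theorem col_eq (h : M.NBisimAt N k x y) : M.col x = N.col y := by
  obtain ⟨S, hmono, hxy, hcol, -, -⟩ := h
  refine hcol x y ?_
  induction k with
  | zero => exact hxy
  | succ k ih => exact ih (hmono k x y hxy)

theorem upColors_eq (h : M.NBisimAt N (k + 1) x y) : M.upColors x = N.upColors y := by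
  ext c
  constructor
  · rintro ⟨x', hx, rfl⟩
    obtain ⟨y', hy, h'⟩ := h.forth hx
    exact ⟨y', hy, h'.col_eq.symm⟩
  · rintro ⟨y', hy, rfl⟩
    obtain ⟨x', hx, h'⟩ := h.symm.forth hy
    exact ⟨x', hx, h'.col_eq.symm⟩

end NBisimAt

theorem iso_of_upColors {M N : Model n}
    (hM : ∀ a b, M.upColors b ⊆ M.upColors a → M.le a b)
    (hN : ∀ a b, N.upColors b ⊆ N.upColors a → N.le a b)
    (hMN : ∀ a, ∃ b, N.col b = M.col a ∧ N.upColors b = M.upColors a)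
    (hNM : ∀ b, ∃ a, M.upColors a = N.upColors b) : M.Iso N := by
  choose f hfc hfu using hMN
  have hle : ∀ a b, M.le a b ↔ N.le (f a) (f b) := fun a b =>
    ⟨fun h => hN _ _ (by rw [hfu, hfu]; exact upColors_anti h),
      fun h => hM _ _ (by rw [← hfu, ← hfu]; exact upColors_anti h)⟩
  have hsurj : Function.Surjective f := fun b => by
    obtain ⟨a, ha⟩ := hNM b
    exact ⟨a, N.antisymm _ _ (hN _ _ (by rw [hfu, ha])) (hN _ _ (by rw [hfu, ha]))⟩
  refine ⟨f, ⟨fun a b hab => ?_, hsurj⟩, ?_, hle, hfc⟩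
  · exact M.antisymm _ _ ((hle a b).2 (hab ▸ N.refl _)) ((hle b a).2 (hab ▸ N.refl _))
  · obtain ⟨r, hr⟩ := hsurj N.root
    exact N.antisymm _ _ (hr ▸ (hle _ _).1 (M.rooted r)) (N.rooted _)

end Model

/-- Let `P`, `Q` be finite Boolean sums of stack-depth at most
`1`, and `(P, x)`, `(Q, y)` `n`-generated models over the same `n` variables
based on them. If they are `2`-bisimilar, then they are isomorphic. -/
theorem statement8 (n : ℕ) (M N : Model n)
    (hMfin : Finite M.W) (hNfin : Finite N.W)
    (hMbs : IsBooleanSum M.frame) (hNbs : IsBooleanSum N.frame)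
    (hMs : ¬ HasStack M.frame 2) (hNs : ¬ HasStack N.frame 2)
    (hMg : M.Generated) (hNg : N.Generated)
    (h : M.NBisim N 2) : M.Iso N := by
  refine Model.iso_of_upColors (fun _ _ => Model.le_of_upColors_subset hMbs hMg hMs)
    (fun _ _ => Model.le_of_upColors_subset hNbs hNg hNs) (fun a => ?_) (fun b => ?_)
  · obtain ⟨b, -, hab⟩ := Model.NBisimAt.forth h (M.rooted a)
    exact ⟨b, hab.col_eq.symm, hab.upColors_eq.symm⟩
  · obtain ⟨a, -, hba⟩ := Model.NBisimAt.forth h.symm (N.rooted b)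
    exact ⟨a, hba.upColors_eq.symm⟩
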